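/- Let Γ be a group equipped with a word length for a finite symmetric generating set, and suppose every conjugacy class of Γ has subexponential growth (for each g, n ↦ |Cl(g) ∩ B_n| is subexponential) and Γ has exponential growth (there is c > 1 with |B_n| ≥ cⁿ for all large n). Then the center Z(Γ) is infinite. -/

import Mathlib

open Filter

def wordBall {Γ : Type*} [Group Γ] (S : Set Γ) (n : ℕ) : Set Γ :=
  {g | ∃ l : List Γ, l.length ≤ n ∧ (∀ x ∈ l, x ∈ S) ∧ l.prod = g}

def conjClass {Γ : Type*} [Group Γ] (h : Γ) : Set Γ := {y | ∃ g : Γ, g⁻¹ * h * g = y}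

def Subexp (f : ℕ → ℕ) : Prop :=
  ∀ c : ℝ, 1 < c → Filter.Tendsto (fun n => (f n : ℝ) / c ^ n) Filter.atTop (nhds 0)

section Aux
variable {Γ : Type*} [Group Γ]

lemma mul_mem_wordBall {S : Set Γ} {a b : ℕ} {g h : Γ}
    (hg : g ∈ wordBall S a) (hh : h ∈ wordBall S b) : g * h ∈ wordBall S (a + b) := by
  obtain ⟨l, hl, hls, hlp⟩ := hg
  obtain ⟨m, hm, hms, hmp⟩ := hh
  exact ⟨l ++ m, by simpa using Nat.add_le_add hl hm,
    by intro x hx; rcases List.mem_append.1 hx with h | h; exacts [hls x h, hms x h],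
    by simp [hlp, hmp]⟩

lemma inv_mem_wordBall {S : Set Γ} (hsym : S⁻¹ = S) {n : ℕ} {g : Γ}
    (hg : g ∈ wordBall S n) : g⁻¹ ∈ wordBall S n := by
  obtain ⟨l, hl, hls, hlp⟩ := hg
  refine ⟨(l.map fun x => x⁻¹).reverse, by simpa using hl, ?_, by
    rw [← hlp, List.prod_inv_reverse]⟩
  intro x hx
  simp only [List.mem_reverse, List.mem_map] at hx
  obtain ⟨y, hy, rfl⟩ := hx
  rw [← hsym]; exact Set.inv_mem_inv.mpr (hls y hy)

lemma self_mem_wordBall {S : Set Γ} {s : Γ} (hs : s ∈ S) : s ∈ wordBall S 1 :=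
  ⟨[s], by simp, by simpa using hs, by simp⟩

lemma wordBall_finite (S : Finset Γ) (n : ℕ) : (wordBall (S : Set Γ) n).Finite := by
  induction n with
  | zero =>
    refine Set.Finite.subset (Set.finite_singleton 1) ?_
    rintro g ⟨l, hl, -, rfl⟩
    simp [List.length_eq_zero_iff.mp (Nat.le_zero.mp hl)]
  | succ n ih =>
    refine Set.Finite.subset (ih.union ((S.finite_toSet.image2 (· * ·) ih))) ?_
    rintro g ⟨l, hl, hls, rfl⟩
    match l with
    | [] => exact Or.inl ⟨[], by simp⟩
    | x :: xs =>
      refine Or.inr ⟨x, hls x (by simp), xs.prod,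
        ⟨xs, ?_, fun y hy => hls y (by simp [hy]), rfl⟩, by simp⟩
      simpa using Nat.succ_le_succ_iff.mp hl

lemma central_of_conj {S : Set Γ} (hgen : Subgroup.closure S = ⊤) (g h : Γ)
    (hc : ∀ s ∈ S, g⁻¹ * s * g = h⁻¹ * s * h) : g * h⁻¹ ∈ Subgroup.center Γ := by
  have key : ∀ s ∈ S, Commute (g * h⁻¹) s := by
    intro s hs
    have h1 : s * g = g * (h⁻¹ * s * h) := by
      rw [← hc s hs]; group
    show g * h⁻¹ * s = s * (g * h⁻¹)
    calc g * h⁻¹ * s = g * (h⁻¹ * s * h) * h⁻¹ := by group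
      _ = s * g * h⁻¹ := by rw [← h1]
      _ = s * (g * h⁻¹) := by group
  rw [Subgroup.mem_center_iff]
  intro x
  have hx : x ∈ Subgroup.closure S := by rw [hgen]; trivial
  have hcomm : Commute (g * h⁻¹) x := by
    induction hx using Subgroup.closure_induction with
    | mem s hs => exact key s hs
    | one => exact Commute.one_right _
    | mul a b _ _ ha hb => exact ha.mul_right hb
    | inv a _ ha => exact ha.inv_right
  exact hcomm.symm

lemma count_bound (S : Finset Γ) (hsym : (S : Set Γ)⁻¹ = (S : Set Γ))
    (hgen : Subgroup.closure (S : Set Γ) = ⊤)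
    (hZ : (Subgroup.center Γ : Set Γ).Finite) (n : ℕ) :
    (wordBall (S : Set Γ) n).ncard ≤ (Subgroup.center Γ : Set Γ).ncard *
      ∏ s ∈ S.attach, (conjClass (s : Γ) ∩ wordBall (S : Set Γ) (2 * n + 1)).ncard := by
  classical
  set W := wordBall (S : Set Γ) n with hW
  set A : ↥S → Set Γ := fun s => conjClass (s : Γ) ∩ wordBall (S : Set Γ) (2 * n + 1) with hA
  set T : Set (↥S → Γ) := Set.univ.pi A with hT
  have hTfin : T.Finite := Set.Finite.pi fun s =>
    ((wordBall_finite S (2 * n + 1)).subset Set.inter_subset_right)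
  set F : Γ → (↥S → Γ) := fun g s => g⁻¹ * s * g with hF
  set r : (↥S → Γ) → Γ := Function.invFunOn F W with hr
  set Φ : Γ → Γ × (↥S → Γ) := fun g => (g * (r (F g))⁻¹, F g) with hΦ
  have hmaps : ∀ g ∈ W, Φ g ∈ (Subgroup.center Γ : Set Γ) ×ˢ T := by
    intro g hg
    have hex : ∃ a ∈ W, F a = F g := ⟨g, hg, rfl⟩
    have hrW : r (F g) ∈ W := Function.invFunOn_mem hex
    have hrF : F (r (F g)) = F g := Function.invFunOn_eq hex
    constructor
    · exact central_of_conj hgen g (r (F g)) fun s hs => (congrFun hrF ⟨s, hs⟩).symm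
    · intro s _
      refine ⟨⟨g, rfl⟩, ?_⟩
      have h1 : g⁻¹ * s * g ∈ wordBall (S : Set Γ) (n + 1 + n) :=
        mul_mem_wordBall (mul_mem_wordBall (inv_mem_wordBall hsym hg)
          (self_mem_wordBall s.2)) hg
      have h2 : n + 1 + n = 2 * n + 1 := by ring
      rwa [h2] at h1
  have hinj : Set.InjOn Φ W := by
    intro g hg g' hg' hgg
    have h2 : F g = F g' := congrArg Prod.snd hgg
    have h1 : g * (r (F g))⁻¹ = g' * (r (F g'))⁻¹ := congrArg Prod.fst hgg
    rw [h2] at h1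
    exact mul_right_cancel h1
  have hle := Set.ncard_le_ncard_of_injOn Φ hmaps hinj (hZ.prod hTfin)
  refine hle.trans ?_
  have hprod : ((Subgroup.center Γ : Set Γ) ×ˢ T).ncard
      = (Subgroup.center Γ : Set Γ).ncard * T.ncard := by
    rw [← Nat.card_coe_set_eq, ← Nat.card_coe_set_eq, ← Nat.card_coe_set_eq,
      Nat.card_congr (Equiv.Set.prod _ _), Nat.card_prod]
  rw [hprod]
  gcongr
  rw [← Nat.card_coe_set_eq, Nat.card_congr (Equiv.Set.univPi A), Nat.card_pi,
    Finset.univ_eq_attach]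
  exact le_of_eq (Finset.prod_congr rfl fun s _ => Nat.card_coe_set_eq _)

end Aux

/-- If every conjugacy class of `Γ` has subexponential growth while `Γ` itself
has exponential growth, then the center of `Γ` is infinite. -/
theorem stmt18 (Γ : Type*) [Group Γ] (S : Finset Γ)
    (hsym : (S : Set Γ)⁻¹ = (S : Set Γ)) (hgen : Subgroup.closure (S : Set Γ) = ⊤)
    (hsub : ∀ g : Γ, Subexp (fun n => (conjClass g ∩ wordBall (S : Set Γ) n).ncard))
    (hexp : ∃ c : ℝ, 1 < c ∧ ∀ᶠ n in atTop, c ^ n ≤ ((wordBall (S : Set Γ) n).ncard : ℝ)) :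
    ((Subgroup.center Γ : Set Γ)).Infinite := by
  classical
  by_contra hinf
  rw [Set.not_infinite] at hinf
  obtain ⟨c, hc, hev⟩ := hexp
  have hc0 : (0 : ℝ) < c := lt_trans one_pos hc
  set k := (Subgroup.center Γ : Set Γ).ncard with hk
  set m := S.card with hm
  set P : ℕ → ℝ := fun n =>
    ∏ s ∈ S.attach, ((conjClass (s : Γ) ∩ wordBall (S : Set Γ) (2 * n + 1)).ncard : ℝ) with hP
  set Q : ℕ → ℝ := fun n => (k : ℝ) * P n / c ^ n with hQ
  have hQ0 : Tendsto Q atTop (nhds 0) := by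
    rcases Nat.eq_zero_or_pos m with hm0 | hm1
    · -- S empty
      have hS : S = ∅ := Finset.card_eq_zero.mp hm0
      have hSe : S.attach = ∅ := by simp [hS]
      have : Q = fun n => (k : ℝ) * (1 / c) ^ n := by
        funext n
        simp [hQ, hP, hSe, div_pow, div_eq_mul_inv, mul_comm]
      rw [this]
      have := tendsto_pow_atTop_nhds_zero_of_lt_one
        (le_of_lt (by positivity : (0:ℝ) < 1 / c)) ((div_lt_one hc0).mpr hc)
      simpa using this.const_mul (k : ℝ)
    · -- S nonempty
      set d : ℝ := c ^ (((2 * m : ℕ) : ℝ))⁻¹ with hd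
      have h2m : (0:ℝ) < ((2 * m : ℕ) : ℝ) := by positivity
      have hd1 : 1 < d := by
        rw [hd]
        exact (Real.one_lt_rpow_iff hc0.le).mpr (Or.inl ⟨hc, by positivity⟩)
      have hd0 : (0:ℝ) < d := lt_trans one_pos hd1
      have hdc : d ^ (2 * m) = c := by
        rw [hd, ← Real.rpow_natCast (c ^ _) (2 * m), ← Real.rpow_mul hc0.le,
          inv_mul_cancel₀ (ne_of_gt h2m), Real.rpow_one]
      have hcomp : Tendsto (fun n : ℕ => 2 * n + 1) atTop atTop :=
        tendsto_atTop_atTop.mpr fun b => ⟨b, fun a ha => by omega⟩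
      have hterm : ∀ s : ↥S, Tendsto (fun n : ℕ =>
          ((conjClass (s : Γ) ∩ wordBall (S : Set Γ) (2 * n + 1)).ncard : ℝ) / d ^ (2 * n + 1))
          atTop (nhds 0) := fun s => (hsub (s : Γ) d hd1).comp hcomp
      have hprodt : Tendsto (fun n : ℕ => ∏ s ∈ S.attach,
          (((conjClass (s : Γ) ∩ wordBall (S : Set Γ) (2 * n + 1)).ncard : ℝ) / d ^ (2 * n + 1)))
          atTop (nhds 0) := by
        have := tendsto_finset_prod (S.attach) (fun s _ => hterm s)
        simpa [Finset.prod_const, Finset.card_attach,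
          zero_pow (by rw [← hm]; omega : S.card ≠ 0)] using this
      have hQeq : ∀ n, Q n = ((k : ℝ) * d ^ m) * ∏ s ∈ S.attach,
          (((conjClass (s : Γ) ∩ wordBall (S : Set Γ) (2 * n + 1)).ncard : ℝ) / d ^ (2 * n + 1)) := by
        intro n
        simp only [hQ, hP]
        rw [Finset.prod_div_distrib, Finset.prod_const, Finset.card_attach, ← hm]
        have hpow : (d ^ (2 * n + 1)) ^ m = c ^ n * d ^ m := by
          rw [← pow_mul, show (2 * n + 1) * m = 2 * m * n + m by ring, pow_add, pow_mul, hdc]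
        rw [hpow]
        have hcn : (c : ℝ) ^ n ≠ 0 := ne_of_gt (pow_pos hc0 n)
        have hdm : (d : ℝ) ^ m ≠ 0 := ne_of_gt (pow_pos hd0 m)
        field_simp
      have : Tendsto Q atTop (nhds (((k : ℝ) * d ^ m) * 0)) := by
        rw [show Q = fun n => ((k : ℝ) * d ^ m) * ∏ s ∈ S.attach,
          (((conjClass (s : Γ) ∩ wordBall (S : Set Γ) (2 * n + 1)).ncard : ℝ) / d ^ (2 * n + 1))
          from funext hQeq]
        exact hprodt.const_mul _
      simpa using this
  have hone : ∀ᶠ n in atTop, (1 : ℝ) ≤ Q n := by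
    filter_upwards [hev] with n hn
    have hbound := count_bound S hsym hgen hinf n
    have hcast : ((wordBall (S : Set Γ) n).ncard : ℝ) ≤ (k : ℝ) * P n := by
      have := (Nat.cast_le (α := ℝ)).mpr hbound
      push_cast at this
      simpa [hP, hk] using this
    have hle : c ^ n ≤ (k : ℝ) * P n := le_trans hn hcast
    rw [hQ]
    rw [le_div_iff₀ (pow_pos hc0 n), one_mul]
    exact hle
  have : (1 : ℝ) ≤ 0 := ge_of_tendsto hQ0 hone
  linarith
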